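/- arXiv:0805.2327 — 2 statements merged into one kernel-verified Lean document; each statement's English description precedes it below -/
import Mathlib

section
/- Let D = {D_j : j ∈ J} be a set of symbols and k a commutative ring with unit. The k-algebra D(X) = kT, where T is the free monoid on the set D^ω(X) = {D_{j1}⋯D_{jm}(x) : x ∈ X, m ≥ 0}, equipped with the linear maps D_j defined by D_j(1) = 0, D_j(D^ī(x)) = D_j D^ī(x), and D_j(D^ī(x)·v) = (D_j D^ī(x))·v + D^ī(x)·D_j(v), is a differential algebra: each D_j is a derivation of D(X). -/
/-- A letter `D^ī(x)` of the free differential algebra: the word `ī` of operator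
indices together with the generator `x`. -/
abbrev Letter (J X : Type*) := List J × X

variable {k J X : Type*} [CommRing k]

/-- The monomial of `D(X) = k⟨(D^ω(X))^*⟩` corresponding to a word `u ∈ T`. -/
noncomputable def monoW (u : List (Letter J X)) : MonoidAlgebra k (FreeMonoid (Letter J X)) :=
  MonoidAlgebra.single (FreeMonoid.ofList u) 1

/-- Action of the derivation `D_j` on a word, defined by the Leibniz rule. -/
noncomputable def derivMon (j : J) : List (Letter J X) → MonoidAlgebra k (FreeMonoid (Letter J X))
  | [] => 0
  | (a, x) :: v =>
      monoW ((j :: a, x) :: v) + monoW [(a, x)] * derivMon j v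

/-- The derivation `D_j` on the free differential algebra `D(X)`. -/
noncomputable def Dop (j : J) :
    MonoidAlgebra k (FreeMonoid (Letter J X)) →ₗ[k] MonoidAlgebra k (FreeMonoid (Letter J X)) :=
  (Finsupp.lsum k fun (u : FreeMonoid (Letter J X)) =>
    LinearMap.toSpanSingleton k (MonoidAlgebra k (FreeMonoid (Letter J X))) (derivMon j u.toList))
    ∘ₗ (MonoidAlgebra.coeffLinearEquiv k).toLinearMap

/-- The composite operator `D^j̄ = D_{j₁} ∘ ⋯ ∘ D_{jₙ}`. -/
noncomputable def Dops (jb : List J) :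
    MonoidAlgebra k (FreeMonoid (Letter J X)) →ₗ[k] MonoidAlgebra k (FreeMonoid (Letter J X)) :=
  jb.foldr (fun j m => (Dop j).comp m) LinearMap.id

/-- `d^j̄(u)`: prepend the operator word `j̄` to the first letter of `u`. -/
def dHat (jb : List J) : List (Letter J X) → List (Letter J X)
  | [] => []
  | (a, x) :: v => (jb ++ a, x) :: v

/-- Coefficient of the word `u` in `f ∈ D(X)`. -/
noncomputable def coeffW (f : MonoidAlgebra k (FreeMonoid (Letter J X)))
    (u : List (Letter J X)) : k := f.coeff (FreeMonoid.ofList u)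

section Order
variable [LinearOrder J] [LinearOrder X]

/-- The order on letters: compare `wt(D^ī(x)) = (x; m, i₁, …, i_m)` lexicographically. -/
def LetterLt (a b : Letter J X) : Prop :=
  a.2 < b.2 ∨ (a.2 = b.2 ∧ (a.1.length < b.1.length ∨
    (a.1.length = b.1.length ∧ List.Lex (· < ·) a.1 b.1)))

/-- The deg-lex order on words: first by length, then lexicographically. -/
def DegLexLt (u v : List (Letter J X)) : Prop :=
  u.length < v.length ∨ (u.length = v.length ∧ List.Lex LetterLt u v)

/-- `u` is the leading term of `f`. -/
def IsLT (f : MonoidAlgebra k (FreeMonoid (Letter J X))) (u : List (Letter J X)) : Prop :=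
  coeffW f u ≠ 0 ∧ ∀ v, coeffW f v ≠ 0 → v ≠ u → DegLexLt v u

/-- `f` is monic with leading term `u`. -/
def MonicW (f : MonoidAlgebra k (FreeMonoid (Letter J X))) (u : List (Letter J X)) : Prop :=
  IsLT f u ∧ coeffW f u = 1

end Order

/-- Membership in the `D`-ideal generated by `S`. -/
inductive InDIdeal (S : Set (MonoidAlgebra k (FreeMonoid (Letter J X)))) :
    MonoidAlgebra k (FreeMonoid (Letter J X)) → Prop
  | of : ∀ s ∈ S, InDIdeal S s
  | zero : InDIdeal S 0
  | add : ∀ {a b}, InDIdeal S a → InDIdeal S b → InDIdeal S (a + b)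
  | smul : ∀ (c : k) {a}, InDIdeal S a → InDIdeal S (c • a)
  | mul_left : ∀ (g) {a}, InDIdeal S a → InDIdeal S (g * a)
  | mul_right : ∀ (g) {a}, InDIdeal S a → InDIdeal S (a * g)
  | deriv : ∀ (j : J) {a}, InDIdeal S a → InDIdeal S (Dop j a)

/-- `(S,𝒟)`-words: `a · D^j̄(s) · b` with `s ∈ S`. -/
def IsSDWord (S : Set (MonoidAlgebra k (FreeMonoid (Letter J X))))
    (g : MonoidAlgebra k (FreeMonoid (Letter J X))) : Prop :=
  ∃ (a b : List (Letter J X)) (jb : List J), ∃ s ∈ S, g = monoW a * Dops jb s * monoW b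

section Order2
variable [LinearOrder J] [LinearOrder X]

/-- `f ≡ 0 mod (S, w)`: `f` is a linear combination of `(S,𝒟)`-words with leading term `< w`. -/
def TrivMod (S : Set (MonoidAlgebra k (FreeMonoid (Letter J X))))
    (w : List (Letter J X)) (f : MonoidAlgebra k (FreeMonoid (Letter J X))) : Prop :=
  f ∈ Submodule.span k {g | IsSDWord S g ∧ ∃ l, IsLT g l ∧ DegLexLt l w}

/-- `S` is a Gröbner–Shirshov basis: all compositions of elements of `S` are trivial. -/
def IsGSB (S : Set (MonoidAlgebra k (FreeMonoid (Letter J X)))) : Prop :=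
  ∀ f ∈ S, ∀ g ∈ S, ∀ fb gb, MonicW f fb → MonicW g gb →
    (∀ a b jb, gb ≠ [] → fb = a ++ dHat jb gb ++ b →
        TrivMod S fb (f - monoW a * Dops jb g * monoW b)) ∧
    (∀ ib b, fb ≠ [] → dHat ib fb = gb ++ b →
        TrivMod S (dHat ib fb) (Dops ib f - g * monoW b)) ∧
    (∀ a b jb, a ≠ [] → b ≠ [] → fb ≠ [] → gb ≠ [] →
        fb ++ b = a ++ dHat jb gb → (fb ++ b).length < fb.length + gb.length →
        TrivMod S (fb ++ b) (f * monoW b - monoW a * Dops jb g))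

/-- `Irr(S)`: words containing no subword `d^ī(s̄)` with `s ∈ S`. -/
def Irr (S : Set (MonoidAlgebra k (FreeMonoid (Letter J X)))) : Set (List (Letter J X)) :=
  {u | ¬ ∃ (a b : List (Letter J X)) (ib : List J), ∃ s ∈ S, ∃ sb, IsLT s sb ∧
        u = a ++ dHat ib sb ++ b}

end Order2

/-- The `D`-ideal generated by `S`, as a `k`-submodule of `D(X)`. -/
noncomputable def DIdealSub (S : Set (MonoidAlgebra k (FreeMonoid (Letter J X)))) :
    Submodule k (MonoidAlgebra k (FreeMonoid (Letter J X))) where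
  carrier := {f | InDIdeal S f}
  add_mem' := fun h1 h2 => InDIdeal.add h1 h2
  zero_mem' := InDIdeal.zero
  smul_mem' := fun c _ h => InDIdeal.smul c h

lemma monoW_append (u v : List (Letter J X)) :
    (monoW (u ++ v) : MonoidAlgebra k (FreeMonoid (Letter J X))) = monoW u * monoW v := by
  simp [monoW, MonoidAlgebra.single_mul_single]

lemma derivMon_append (j : J) (u v : List (Letter J X)) :
    (derivMon j (u ++ v) : MonoidAlgebra k (FreeMonoid (Letter J X)))
      = derivMon j u * monoW v + monoW u * derivMon j v := by
  induction u with
  | nil =>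
      have : (monoW ([] : List (Letter J X)) : MonoidAlgebra k (FreeMonoid (Letter J X))) = 1 := rfl
      simp [derivMon, this]
  | cons a w ih =>
      obtain ⟨l, x⟩ := a
      show (derivMon j (((l, x) :: (w ++ v)))
          : MonoidAlgebra k (FreeMonoid (Letter J X))) = _
      rw [derivMon, ih]
      have h1 : ((j :: l, x) :: (w ++ v)) = ((j :: l, x) :: w) ++ v := rfl
      have h2 : ((l, x) :: w) = [(l, x)] ++ w := rfl
      rw [h1, monoW_append, h2, monoW_append]
      show _ = (derivMon j ((l, x) :: w)) * monoW v + _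
      rw [derivMon]
      noncomm_ring

lemma Dop_single (j : J) (u : FreeMonoid (Letter J X)) (c : k) :
    Dop j (MonoidAlgebra.single u c) = c • derivMon j u.toList := by
  rw [Dop, LinearMap.comp_apply]
  erw [Finsupp.lsum_single]
  rw [LinearMap.toSpanSingleton_apply]

/-- Each `D_j` is a derivation of the free differential algebra `D(X)`. -/
theorem stmt0 (j : J) (a b : MonoidAlgebra k (FreeMonoid (Letter J X))) :
    Dop j (a * b) = Dop j a * b + a * Dop j b := by
  induction a using MonoidAlgebra.induction_linear with
  | zero => simp
  | add f g hf hg =>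
      rw [add_mul, map_add, hf, hg, map_add]; noncomm_ring
  | single u c =>
      induction b using MonoidAlgebra.induction_linear with
      | zero => simp
      | add f g hf hg =>
          rw [mul_add, map_add, hf, hg, map_add]; noncomm_ring
      | single v d =>
          have hm : (MonoidAlgebra.single u c : MonoidAlgebra k (FreeMonoid (Letter J X))) *
              MonoidAlgebra.single v d = MonoidAlgebra.single (u * v) (c * d) :=
            MonoidAlgebra.single_mul_single ..
          rw [hm, Dop_single, Dop_single, Dop_single]
          have ht : (u * v).toList = u.toList ++ v.toList := rfl
          rw [ht, derivMon_append]
          have hu : (MonoidAlgebra.single u c : MonoidAlgebra k (FreeMonoid (Letter J X)))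
              = c • monoW u.toList := by
            rw [monoW, FreeMonoid.ofList_toList, MonoidAlgebra.smul_single', mul_one]
          have hv : (MonoidAlgebra.single v d : MonoidAlgebra k (FreeMonoid (Letter J X)))
              = d • monoW v.toList := by
            rw [monoW, FreeMonoid.ofList_toList, MonoidAlgebra.smul_single', mul_one]
          rw [hu, hv]
          simp only [smul_mul_assoc, mul_smul_comm, smul_add, smul_smul, mul_comm d c]
end

section
/- For any u, v ∈ T \ {1}, if u > v in the deg-lex order, then the leading term of D(u) is greater than the leading term of D(v), for any D ∈ D. Hence the deg-lex order on T is monomial with respect to the differential operators. -/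
variable {k J X : Type*} [CommRing k]

section StmtAux

lemma Dop_monoW' (j : J) (u : List (Letter J X)) :
    Dop j (monoW u : MonoidAlgebra k (FreeMonoid (Letter J X))) = derivMon j u := by
  simp [Dop, monoW, MonoidAlgebra.coeff_single]

lemma coeffW_add (f g : MonoidAlgebra k (FreeMonoid (Letter J X))) (w : List (Letter J X)) :
    coeffW (f + g) w = coeffW f w + coeffW g w := rfl

lemma ofList_inj' {u w : List (Letter J X)} (h : FreeMonoid.ofList u = FreeMonoid.ofList w) :
    u = w := by
  have := congrArg FreeMonoid.toList h
  simpa using this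

lemma coeff_monoW_self (u : List (Letter J X)) :
    coeffW (monoW u : MonoidAlgebra k (FreeMonoid (Letter J X))) u = 1 := by
  classical
  rw [coeffW, monoW, MonoidAlgebra.coeff_single, Finsupp.single_apply, if_pos rfl]

lemma coeff_monoW_ne {u w : List (Letter J X)} (h : w ≠ u) :
    coeffW (monoW u : MonoidAlgebra k (FreeMonoid (Letter J X))) w = 0 := by
  classical
  rw [coeffW, monoW, MonoidAlgebra.coeff_single, Finsupp.single_apply,
    if_neg (fun he => h (ofList_inj' he).symm)]

lemma coeff_cons_mul (l : Letter J X) (f : MonoidAlgebra k (FreeMonoid (Letter J X)))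
    (t : List (Letter J X)) :
    coeffW (monoW [l] * f) (l :: t) = coeffW f t := by
  unfold coeffW monoW
  rw [MonoidAlgebra.single_mul_apply_aux (m₂ := FreeMonoid.ofList t)]
  · simp
  · intro a _
    constructor
    · intro h
      have := congrArg FreeMonoid.toList h
      exact FreeMonoid.toList.injective (by simpa [FreeMonoid.toList_mul] using this)
    · rintro rfl; rfl

lemma coeff_cons_mul_ne_zero (l : Letter J X) (f : MonoidAlgebra k (FreeMonoid (Letter J X)))
    (w : List (Letter J X)) (h : coeffW (monoW [l] * f) w ≠ 0) :
    ∃ t, w = l :: t ∧ coeffW f t ≠ 0 := by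
  classical
  have hw : FreeMonoid.ofList w ∈ (monoW [l] * f :
      MonoidAlgebra k (FreeMonoid (Letter J X))).coeff.support := Finsupp.mem_support_iff.2 h
  have hsub := MonoidAlgebra.support_coeff_single_mul_subset f (1 : k) (FreeMonoid.ofList [l])
  rw [monoW] at hw
  have hmem := hsub hw
  simp only [Finset.mem_image] at hmem
  obtain ⟨a, _, ha⟩ := hmem
  have hwa : w = l :: a.toList := by
    have := congrArg FreeMonoid.toList ha
    simpa [FreeMonoid.toList_mul] using this.symm
  refine ⟨a.toList, hwa, fun h0 => h ?_⟩
  rw [hwa, coeff_cons_mul]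
  exact h0

lemma dHat_length (jb : List J) (u : List (Letter J X)) : (dHat jb u).length = u.length := by
  cases u with
  | nil => rfl
  | cons hd t => obtain ⟨a, x⟩ := hd; rfl

section OrderAux
variable [LinearOrder J] [LinearOrder X]

lemma letterLt_asymm {a b : Letter J X} (h1 : LetterLt a b) (h2 : LetterLt b a) : False := by
  rcases h1 with h | ⟨e1, h1⟩ <;> rcases h2 with h' | ⟨e2, h2⟩
  · exact lt_asymm h h'
  · exact absurd e2 (ne_of_gt h)
  · exact absurd e1 (ne_of_gt h')
  · rcases h1 with h1 | ⟨e3, h1⟩ <;> rcases h2 with h2 | ⟨e4, h2⟩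
    · omega
    · omega
    · omega
    · exact List.Lex.asymm (· < ·) |>.asymm _ _ h1 h2

instance : IsAsymm (Letter J X) LetterLt := ⟨fun _ _ h h' => letterLt_asymm h h'⟩

lemma degLexLt_asymm {u v : List (Letter J X)} (h1 : DegLexLt u v) (h2 : DegLexLt v u) :
    False := by
  rcases h1 with h | ⟨e1, h1⟩ <;> rcases h2 with h' | ⟨e2, h2⟩
  · omega
  · omega
  · omega
  · exact List.Lex.asymm LetterLt |>.asymm _ _ h1 h2

lemma isLT_unique {f : MonoidAlgebra k (FreeMonoid (Letter J X))} {l l' : List (Letter J X)}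
    (h : IsLT f l) (h' : IsLT f l') : l = l' := by
  by_contra hne
  exact degLexLt_asymm (h.2 l' h'.1 (fun he => hne he.symm)) (h'.2 l h.1 hne)

lemma letterLt_cons (j : J) {a b : Letter J X} (h : LetterLt a b) :
    LetterLt (j :: a.1, a.2) (j :: b.1, b.2) := by
  rcases h with h | ⟨e, h | ⟨e2, h⟩⟩
  · exact Or.inl h
  · exact Or.inr ⟨e, Or.inl (by simpa using h)⟩
  · exact Or.inr ⟨e, Or.inr ⟨by simpa using e2, List.Lex.cons h⟩⟩

lemma lex_dHat (j : J) {v u : List (Letter J X)} (hv : v ≠ []) (hu : u ≠ [])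
    (h : List.Lex LetterLt v u) :
    List.Lex LetterLt (dHat [j] v) (dHat [j] u) := by
  cases v with
  | nil => exact absurd rfl hv
  | cons p v' =>
    cases u with
    | nil => exact absurd rfl hu
    | cons q u' =>
      obtain ⟨a, x⟩ := p
      obtain ⟨b, y⟩ := q
      cases h with
      | rel h' => exact List.Lex.rel (letterLt_cons j h')
      | cons h' => exact List.Lex.cons h'

lemma derivMon_spec (j : J) : ∀ u : List (Letter J X), u ≠ [] →
    (∀ w, coeffW (derivMon j u : MonoidAlgebra k (FreeMonoid (Letter J X))) w ≠ 0 →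
        w.length = u.length ∧ (w ≠ dHat [j] u → List.Lex LetterLt w (dHat [j] u))) ∧
    coeffW (derivMon j u : MonoidAlgebra k (FreeMonoid (Letter J X))) (dHat [j] u) = 1 := by
  intro u
  induction u with
  | nil => intro h; exact absurd rfl h
  | cons hd v IH =>
    intro _
    obtain ⟨a, x⟩ := hd
    have hd1 : dHat [j] ((a, x) :: v) = (j :: a, x) :: v := rfl
    by_cases hv : v = []
    · subst hv
      have he : (derivMon j ((a, x) :: []) : MonoidAlgebra k (FreeMonoid (Letter J X)))
          = monoW [(j :: a, x)] := by
        show monoW ((j :: a, x) :: []) + monoW [(a, x)] * derivMon j [] = _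
        show monoW ((j :: a, x) :: []) + monoW [(a, x)] * 0 = _
        rw [mul_zero, add_zero]
      rw [he, hd1]
      constructor
      · intro w hw
        have hwe : w = [(j :: a, x)] := by
          by_contra hne
          exact hw (coeff_monoW_ne hne)
        subst hwe
        exact ⟨rfl, fun hne => absurd rfl hne⟩
      · exact coeff_monoW_self _
    · obtain ⟨IH1, IH2⟩ := IH hv
      have he : (derivMon j ((a, x) :: v) : MonoidAlgebra k (FreeMonoid (Letter J X)))
          = monoW ((j :: a, x) :: v) + monoW [(a, x)] * derivMon j v := rfl
      have hne0 : ((j :: a, x) :: v : List (Letter J X)) ≠ (a, x) :: v := by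
        intro h
        have h1 : ((j :: a, x) : Letter J X) = (a, x) := (List.cons_eq_cons.mp h).1
        have : (j :: a : List J) = a := congrArg Prod.fst h1
        exact absurd (congrArg List.length this) (by simp)
      constructor
      · intro w hw
        by_cases hweq : w = (j :: a, x) :: v
        · subst hweq
          exact ⟨rfl, fun hne => absurd hd1.symm hne⟩
        · rw [he, coeffW_add, coeff_monoW_ne hweq, zero_add] at hw
          obtain ⟨t, rfl, ht⟩ := coeff_cons_mul_ne_zero _ _ _ hw
          obtain ⟨ht1, _⟩ := IH1 t ht
          refine ⟨by simpa using ht1, fun _ => ?_⟩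
          rw [hd1]
          refine List.Lex.rel (Or.inr ⟨rfl, Or.inl ?_⟩)
          simp
      · rw [he, hd1, coeffW_add, coeff_monoW_self]
        have hz : coeffW (monoW [(a, x)] * derivMon j v :
            MonoidAlgebra k (FreeMonoid (Letter J X))) ((j :: a, x) :: v) = 0 := by
          by_contra hc
          obtain ⟨t, hteq, _⟩ := coeff_cons_mul_ne_zero _ _ _ hc
          have : ((j :: a, x) : Letter J X) = (a, x) := (List.cons_eq_cons.mp hteq).1
          have : (j :: a : List J) = a := congrArg Prod.fst this
          exact absurd (congrArg List.length this) (by simp)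
        rw [hz, add_zero]

lemma isLT_derivMon (j : J) (u : List (Letter J X)) (hu : u ≠ []) (h01 : (1 : k) ≠ 0) :
    IsLT (derivMon j u : MonoidAlgebra k (FreeMonoid (Letter J X))) (dHat [j] u) := by
  obtain ⟨hs, hc⟩ := derivMon_spec (k := k) j u hu
  refine ⟨by rw [hc]; exact h01, fun w hw hne => ?_⟩
  obtain ⟨hlen, hlex⟩ := hs w hw
  exact Or.inr ⟨by rw [hlen, dHat_length], hlex hne⟩

end OrderAux

end StmtAux

/-- For nonempty words `u > v`, the leading term of `D(u)` exceeds that of `D(v)`: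
the deg-lex order is monomial with respect to the differential operators. -/
theorem stmt5 [LinearOrder J] [LinearOrder X] (u v : List (Letter J X))
    (hu : u ≠ []) (hv : v ≠ []) (huv : DegLexLt v u) (j : J)
    (lu lv : List (Letter J X))
    (h1 : IsLT (Dop j (monoW u : MonoidAlgebra k (FreeMonoid (Letter J X)))) lu)
    (h2 : IsLT (Dop j (monoW v : MonoidAlgebra k (FreeMonoid (Letter J X)))) lv) :
    DegLexLt lv lu := by
  by_cases h01 : (1 : k) = 0
  · exfalso
    apply h1.1
    have : Subsingleton k := subsingleton_of_zero_eq_one h01.symm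
    exact Subsingleton.elim _ _
  · rw [Dop_monoW'] at h1 h2
    have hlu : lu = dHat [j] u := isLT_unique h1 (isLT_derivMon j u hu h01)
    have hlv : lv = dHat [j] v := isLT_unique h2 (isLT_derivMon j v hv h01)
    subst hlu; subst hlv
    rcases huv with h | ⟨e, h⟩
    · exact Or.inl (by rw [dHat_length, dHat_length]; exact h)
    · exact Or.inr ⟨by rw [dHat_length, dHat_length]; exact e, lex_dHat j hv hu h⟩
end
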